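/- arXiv:1708.00125 — 2 statements merged into one kernel-verified Lean document; each statement's English description precedes it below -/
import Mathlib

section
/- If a graph G vertex-arrows (K_{a_1}, ..., K_{a_r}) and a graph H vertex-arrows (H_1, ..., H_r), then the lexicographic product G[H] vertex-arrows (K_{a_1}[H_1], ..., K_{a_r}[H_r]). -/
open SimpleGraph

/-- `Copies G F S`: `G` contains a copy of `F` all of whose vertices lie in `S`. -/
def Copies {α β : Type*} (G : SimpleGraph α) (F : SimpleGraph β) (S : Set α) : Prop :=
  ∃ f : β ↪ α, (∀ a b, F.Adj a b → G.Adj (f a) (f b)) ∧ ∀ a, f a ∈ S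

/-- `G` vertex-arrows the family `F` of graphs. -/
def VArrows {α : Type*} (G : SimpleGraph α) {r : ℕ} {β : Fin r → Type*}
    (F : ∀ i, SimpleGraph (β i)) : Prop :=
  ∀ C : α → Fin r, ∃ i, Copies G (F i) {v | C v = i}

/-- `G` vertex-arrows `(F1, F2)`. -/
def VArrows2 {α β γ : Type*} (G : SimpleGraph α) (F1 : SimpleGraph β) (F2 : SimpleGraph γ) :
    Prop :=
  ∀ C : α → Bool, Copies G F1 {v | C v = true} ∨ Copies G F2 {v | C v = false}

/-- `G` edge-arrows `(F1, F2)`: every red subgraph `R ≤ G` yields a red `F1` or a blue `F2`. -/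
def EArrows2 {α β γ : Type*} (G : SimpleGraph α) (F1 : SimpleGraph β) (F2 : SimpleGraph γ) :
    Prop :=
  ∀ R : SimpleGraph α, R ≤ G → Copies R F1 Set.univ ∨ Copies (G \ R) F2 Set.univ

/-- Vertex Folkman number for a family of target graphs. -/
noncomputable def Fv {r : ℕ} {β : Fin r → Type*} (F : ∀ i, SimpleGraph (β i)) (k : ℕ) : ℕ :=
  sInf {n | ∃ G : SimpleGraph (Fin n), G.CliqueFree k ∧ VArrows G F}

/-- Two-color vertex Folkman number. -/
noncomputable def Fv2 {β γ : Type*} (F1 : SimpleGraph β) (F2 : SimpleGraph γ) (k : ℕ) : ℕ :=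
  sInf {n | ∃ G : SimpleGraph (Fin n), G.CliqueFree k ∧ VArrows2 G F1 F2}

/-- Two-color edge Folkman number. -/
noncomputable def Fe2 {β γ : Type*} (F1 : SimpleGraph β) (F2 : SimpleGraph γ) (k : ℕ) : ℕ :=
  sInf {n | ∃ G : SimpleGraph (Fin n), G.CliqueFree k ∧ EArrows2 G F1 F2}

/-- Lexicographic product `G[H]`. -/
def lexProd {α β : Type*} (G : SimpleGraph α) (H : SimpleGraph β) : SimpleGraph (α × β) where
  Adj x y := G.Adj x.1 y.1 ∨ (x.1 = y.1 ∧ H.Adj x.2 y.2)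
  symm := by constructor; rintro x y (h | ⟨e, h⟩); exacts [Or.inl h.symm, Or.inr ⟨e.symm, h.symm⟩]
  loopless := by constructor; rintro x (h | ⟨_, h⟩); exacts [G.loopless.irrefl _ h, H.loopless.irrefl _ h]

/-- Complete graph on `k` vertices. -/
def Kc (k : ℕ) : SimpleGraph (Fin k) := completeGraph (Fin k)

/-- `J_k = K_k - e`: complete graph on `k` vertices minus one edge (the one
joining the two distinguished right-hand vertices). -/
def Jgraph (k : ℕ) : SimpleGraph (Fin (k - 2) ⊕ Fin 2) where
  Adj x y := x ≠ y ∧ ¬(x.isRight ∧ y.isRight)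
  symm := ⟨fun x y ⟨h1, h2⟩ => ⟨h1.symm, fun ⟨a, b⟩ => h2 ⟨b, a⟩⟩⟩
  loopless := ⟨fun x h => h.1 rfl⟩

/-- Cycle on `n` vertices. -/
def cycle (n : ℕ) : SimpleGraph (ZMod n) where
  Adj i j := i ≠ j ∧ (i - j = 1 ∨ j - i = 1)
  symm := ⟨fun i j ⟨h1, h2⟩ => ⟨h1.symm, h2.symm⟩⟩
  loopless := ⟨fun i h => h.1 rfl⟩

/-- Join of two graphs: disjoint union plus all cross edges. -/
def graphJoin {α β : Type*} (G : SimpleGraph α) (H : SimpleGraph β) :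
    SimpleGraph (α ⊕ β) where
  Adj x y := (∃ a b, x = .inl a ∧ y = .inl b ∧ G.Adj a b) ∨
             (∃ a b, x = .inr a ∧ y = .inr b ∧ H.Adj a b) ∨
             (x.isLeft ∧ y.isRight) ∨ (x.isRight ∧ y.isLeft)
  symm := by
    constructor; rintro x y (⟨a, b, rfl, rfl, h⟩ | ⟨a, b, rfl, rfl, h⟩ | ⟨h1, h2⟩ | ⟨h1, h2⟩)
    · exact Or.inl ⟨b, a, rfl, rfl, h.symm⟩
    · exact Or.inr (Or.inl ⟨b, a, rfl, rfl, h.symm⟩)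
    · exact Or.inr (Or.inr (Or.inr ⟨h2, h1⟩))
    · exact Or.inr (Or.inr (Or.inl ⟨h2, h1⟩))
  loopless := by
    constructor; rintro x (⟨a, b, rfl, h, h'⟩ | ⟨a, b, rfl, h, h'⟩ | ⟨h1, h2⟩ | ⟨h1, h2⟩)
    · cases h; exact G.loopless.irrefl _ h'
    · cases h; exact H.loopless.irrefl _ h'
    · cases x <;> simp_all
    · cases x <;> simp_all

/-- Clique number: the largest size of a clique. -/
noncomputable def cliqueNum' {α : Type*} (G : SimpleGraph α) : ℕ :=
  sSup {n | ∃ s : Finset α, G.IsNClique n s}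

theorem Copies.lexProd {α β κ γ : Type*} {G : SimpleGraph α} {H : SimpleGraph β}
    {K : SimpleGraph κ} {F : SimpleGraph γ} {S : Set (α × β)} (g : κ ↪ α)
    (hg : ∀ x y, K.Adj x y → G.Adj (g x) (g y)) (hF : ∀ x, Copies H F {v | (g x, v) ∈ S}) :
    Copies (lexProd G H) (lexProd K F) S := by
  choose f hf hfS using hF
  refine ⟨⟨fun p => (g p.1, f p.1 p.2), ?_⟩, ?_, fun p => hfS p.1 p.2⟩
  · rintro ⟨x, u⟩ ⟨y, v⟩ h
    obtain ⟨hxy, huv⟩ := Prod.ext_iff.mp h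
    obtain rfl : x = y := g.injective hxy
    exact Prod.ext rfl ((f x).injective huv)
  · rintro ⟨x, u⟩ ⟨y, v⟩ (hK | ⟨rfl, hF⟩)
    exacts [Or.inl (hg x y hK), Or.inr ⟨rfl, hf x u v hF⟩]

/-- Colour each fibre `{u} × β` of `G[H]` by the colour of an `F_i` it contains; a monochromatic
`K_i` in that colouring of `G` then carries, over each of its vertices, a copy of `F_i` of
colour `i`. -/
theorem VArrows.lexProd {α β : Type*} {G : SimpleGraph α} {H : SimpleGraph β} {r : ℕ}
    {κ γ : Fin r → Type*} {K : ∀ i, SimpleGraph (κ i)} {F : ∀ i, SimpleGraph (γ i)}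
    (hG : VArrows G K) (hH : VArrows H F) :
    VArrows (lexProd G H) (fun i => lexProd (K i) (F i)) := by
  intro C
  choose D hD using fun u => hH fun v => C (u, v)
  obtain ⟨i, g, hg, hgD⟩ := hG D
  refine ⟨i, Copies.lexProd g hg fun x => ?_⟩
  have hcopy := hD (g x)
  rwa [show D (g x) = i from hgD x] at hcopy

theorem lexProd_vertex_arrows_general {α β : Type*} (G : SimpleGraph α) (H : SimpleGraph β)
    {r : ℕ} {γ : Fin r → Type*} (a : Fin r → ℕ) (F : ∀ i, SimpleGraph (γ i))
    (hG : VArrows G (fun i => Kc (a i)))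
    (hH : VArrows H F) :
    VArrows (lexProd G H) (fun i => lexProd (Kc (a i)) (F i)) :=
  hG.lexProd hH

/-- If `G → (K_{a_1},…,K_{a_r})^v` and `H → (H_1,…,H_r)^v`, then
`G[H] → (K_{a_1}[H_1],…,K_{a_r}[H_r])^v`. -/
theorem lexProd_vertex_arrows {α β : Type*} (G : SimpleGraph α) (H : SimpleGraph β)
    {r : ℕ} {γ : Fin r → Type*} (a : Fin r → ℕ) (F : ∀ i, SimpleGraph (γ i))
    (ha : ∀ i, 2 ≤ a i)
    (hG : VArrows G (fun i => Kc (a i)))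
    (hH : VArrows H F) :
    VArrows (lexProd G H) (fun i => lexProd (Kc (a i)) (F i)) :=
  lexProd_vertex_arrows_general G H a F hG hH
end

section
/- If G vertex-arrows (K_{k-1}, K_{k-1}), G has the minimum order F_v(k-1,k-1;k) among K_k-free such graphs, and f(G) is the largest order of a K_{k-1}-free induced subgraph of G, then F_v(J_k, J_k; k) ≤ 3·F_v(k-1,k-1;k) − f(G). -/
open SimpleGraph

/-! `J_k` is `K_{k-1}` with one vertex doubled, so it lives in any blow-up of a `K_{k-1}` in which
some vertex has two copies. The witness is the blow-up of `G` along `p : α ⊕ α ⊕ sᶜ → α`, where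
`s` spans a maximum `K_{k-1}`-free induced subgraph: vertices in `s` are doubled, the others
tripled, giving `3|G| - f` vertices and no `K_k`. Colour a vertex `v` of `G` with `false` iff two
vertices over `v` have colour `false`. A `false` clique `K_{k-1}` of `G` lifts to a `false` `J_k`
at once. A `true` one has a vertex outside `s`; each of its vertices has a copy of colour `true`,
and the tripled vertex has two. -/

section Blowup

variable {α β γ W : Type*}

namespace SimpleGraph

theorem CliqueFree.of_hom {H : SimpleGraph W} {G : SimpleGraph α} {n : ℕ} (f : H →g G)
    (h : G.CliqueFree n) : H.CliqueFree n := by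
  contrapose h
  rw [not_cliqueFree_iff_top_isContained] at h ⊢
  obtain ⟨c⟩ := h
  let e := f.comp c.toHom
  exact ⟨e.toCopy (Hom.injective_of_top_hom e)⟩

end SimpleGraph

theorem Copies.of_copy {G : SimpleGraph α} {H : SimpleGraph W} {F : SimpleGraph β} {S : Set W}
    (e : Copy G H) (h : Copies G F (e ⁻¹' S)) : Copies H F S := by
  obtain ⟨f, hadj, hS⟩ := h
  exact ⟨f.trans e.toEmbedding, fun a b hab => e.toHom.map_adj (hadj a b hab), hS⟩

theorem VArrows2.of_copy {G : SimpleGraph α} {H : SimpleGraph W} {F₁ : SimpleGraph β}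
    {F₂ : SimpleGraph γ} (e : Copy G H) (h : VArrows2 G F₁ F₂) : VArrows2 H F₁ F₂ := fun C =>
  (h (C ∘ e)).imp (Copies.of_copy e) (Copies.of_copy e)

theorem Fv2_le_card [Fintype W] {H : SimpleGraph W} {F₁ : SimpleGraph β} {F₂ : SimpleGraph γ}
    {k : ℕ} (hfree : H.CliqueFree k) (harr : VArrows2 H F₁ F₂) :
    Fv2 F₁ F₂ k ≤ Fintype.card W := by
  let e := H.overFinIso rfl
  exact Nat.sInf_le ⟨_, hfree.comap e.symm.toCopy.isContained, harr.of_copy e.toCopy⟩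

theorem Copies.not_cliqueFree_induce {G : SimpleGraph α} {S : Set α} {n : ℕ}
    (h : Copies G (Kc n) S) : ¬(G.induce S).CliqueFree n := by
  obtain ⟨f, hadj, hS⟩ := h
  rw [not_cliqueFree_iff_top_isContained]
  exact ⟨⟨⟨fun a => ⟨f a, hS a⟩, fun hab => hadj _ _ hab⟩,
    fun a b hab => f.injective (congrArg Subtype.val hab)⟩⟩

theorem exists_finset_card_eq_sSup [Fintype α] {P : Finset α → Prop} (h : ∃ s, P s) :
    ∃ s, P s ∧ s.card = sSup {m | ∃ s : Finset α, s.card = m ∧ P s} := by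
  obtain ⟨s, hP⟩ := h
  obtain ⟨t, ht, hPt⟩ := Nat.sSup_mem (s := {m | ∃ s : Finset α, s.card = m ∧ P s})
    ⟨_, s, rfl, hP⟩ ⟨Fintype.card α, by rintro _ ⟨s, rfl, -⟩; exact s.card_le_univ⟩
  exact ⟨t, hPt, ht⟩

theorem copies_Jgraph_comap {G : SimpleGraph α} {p : W → α} {S : Set W} {k : ℕ}
    (g : Fin (k - 1) ↪ α) (hg : ∀ i j, (Kc (k - 1)).Adj i j → G.Adj (g i) (g j))
    (z : Fin (k - 1) → W) (hz : ∀ i, p (z i) = g i) (hzS : ∀ i, z i ∈ S)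
    (i₀ : Fin (k - 1)) {x y : W} (hxy : x ≠ y) (hx : p x = g i₀) (hy : p y = g i₀)
    (hxS : x ∈ S) (hyS : y ∈ S) : Copies (G.comap p) (Jgraph k) S := by
  obtain ⟨e⟩ : Nonempty (Fin (k - 2) ≃ {i // i ≠ i₀}) :=
    ⟨(Fintype.equivFinOfCardEq (by simp [Fintype.card_subtype_compl]; omega)).symm⟩
  let ψ : Fin (k - 2) ⊕ Fin 2 → Fin (k - 1) := Sum.elim (fun j => e j) fun _ => i₀
  let φ : Fin (k - 2) ⊕ Fin 2 → W := Sum.elim (fun j => z (e j)) ![x, y]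
  have hpφ : ∀ a, p (φ a) = g (ψ a) := by
    rintro (j | t)
    · exact hz _
    · fin_cases t <;> assumption
  have hψ : ∀ a b, (Jgraph k).Adj a b → ψ a ≠ ψ b := by
    rintro (j | t) (j' | t') ⟨hne, hr⟩
    · exact fun h => hne (congrArg _ (e.injective (Subtype.val_injective h)))
    · exact (e j).2
    · exact fun h => (e j').2 h.symm
    · exact absurd ⟨rfl, rfl⟩ hr
  have hφ : Function.Injective φ := by
    intro a b hab
    by_contra hne
    have hψab : ψ a = ψ b := g.injective (by rw [← hpφ, ← hpφ, hab])
    rcases a with j | t <;> rcases b with j' | t'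
    · exact hne (congrArg _ (e.injective (Subtype.val_injective hψab)))
    · exact (e j).2 hψab
    · exact (e j').2 hψab.symm
    · fin_cases t <;> fin_cases t' <;> simp_all [φ]
  refine ⟨⟨φ, hφ⟩, fun a b hab => ?_, ?_⟩
  · change G.Adj (p (φ a)) (p (φ b))
    rw [hpφ, hpφ]
    exact hg _ _ (hψ a b hab)
  · rintro (j | t)
    · exact hzS _
    · fin_cases t <;> assumption

section Fibres

variable (p : W → α) (C : W → Bool)

def TwoOver (v : α) (b : Bool) : Prop :=
  ∃ x y, x ≠ y ∧ p x = v ∧ p y = v ∧ C x = b ∧ C y = b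

variable {p C}

theorem eq_true_or_eq_true_of_not_twoOver_false {v : α} {x y : W} (hxy : x ≠ y) (hx : p x = v)
    (hy : p y = v) (h : ¬TwoOver p C v false) : C x = true ∨ C y = true := by
  by_contra! hC
  simp only [ne_eq, Bool.not_eq_true] at hC
  exact h ⟨x, y, hxy, hx, hy, hC⟩

theorem twoOver_true_of_not_twoOver_false {v : α} {x y z : W} (hxy : x ≠ y) (hxz : x ≠ z)
    (hyz : y ≠ z) (hx : p x = v) (hy : p y = v) (hz : p z = v) (h : ¬TwoOver p C v false) :
    TwoOver p C v true := by
  rcases eq_true_or_eq_true_of_not_twoOver_false hxy hx hy h with hCx | hCy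
  · rcases eq_true_or_eq_true_of_not_twoOver_false hyz hy hz h with hCy | hCz
    · exact ⟨x, y, hxy, hx, hy, hCx, hCy⟩
    · exact ⟨x, z, hxz, hx, hz, hCx, hCz⟩
  · rcases eq_true_or_eq_true_of_not_twoOver_false hxz hx hz h with hCx | hCz
    · exact ⟨x, y, hxy, hx, hy, hCx, hCy⟩
    · exact ⟨y, z, hyz, hy, hz, hCy, hCz⟩

end Fibres

theorem VArrows2.comap_Jgraph {G : SimpleGraph α} {k : ℕ} (hk : 2 ≤ k)
    (hG : VArrows2 G (Kc (k - 1)) (Kc (k - 1))) {s : Set α}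
    (hs : (G.induce s).CliqueFree (k - 1)) (p : W → α)
    (hp₂ : ∀ v, ∃ x y, x ≠ y ∧ p x = v ∧ p y = v)
    (hp₃ : ∀ v ∉ s, ∃ x y z, x ≠ y ∧ x ≠ z ∧ y ≠ z ∧ p x = v ∧ p y = v ∧ p z = v) :
    VArrows2 (G.comap p) (Jgraph k) (Jgraph k) := by
  classical
  intro C
  rcases hG fun v => decide ¬TwoOver p C v false with ⟨g, hg, hgC⟩ | ⟨g, hg, hgC⟩
  · simp only [Set.mem_ofPred_eq, decide_eq_true_eq] at hgC
    have hz : ∀ i, ∃ x, p x = g i ∧ C x = true := fun i => by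
      obtain ⟨x, y, hxy, hx, hy⟩ := hp₂ (g i)
      exact (eq_true_or_eq_true_of_not_twoOver_false hxy hx hy (hgC i)).elim
        (⟨x, hx, ·⟩) (⟨y, hy, ·⟩)
    choose z hzp hzC using hz
    obtain ⟨i₀, hi₀⟩ : ∃ i, g i ∉ s := by
      by_contra! hgs
      exact Copies.not_cliqueFree_induce ⟨g, hg, hgs⟩ hs
    obtain ⟨x₁, x₂, x₃, h₁₂, h₁₃, h₂₃, hx₁, hx₂, hx₃⟩ := hp₃ _ hi₀
    obtain ⟨x, y, hxy, hx, hy, hxC, hyC⟩ :=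
      twoOver_true_of_not_twoOver_false h₁₂ h₁₃ h₂₃ hx₁ hx₂ hx₃ (hgC i₀)
    exact .inl (copies_Jgraph_comap g hg z hzp hzC i₀ hxy hx hy hxC hyC)
  · simp only [Set.mem_ofPred_eq, decide_eq_false_iff_not, not_not] at hgC
    choose x y hxy hx hy hxC hyC using hgC
    exact .inr (copies_Jgraph_comap g hg x hx hxC ⟨0, by omega⟩
      (hxy _) (hx _) (hy _) (hxC _) (hyC _))

end Blowup

/-- If `G` is a minimum-order `K_k`-free graph vertex-arrowing `(K_{k-1},K_{k-1})`
and `f` is the largest order of a `K_{k-1}`-free induced subgraph of `G`, then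
`F_v(J_k,J_k;k) ≤ 3F_v(k-1,k-1;k) − f`. -/
theorem Fv_Jk_le_three_Fv_sub_f (k : ℕ) (hk : 3 ≤ k) {α : Type*} [Fintype α]
    (G : SimpleGraph α)
    (hGfree : G.CliqueFree k)
    (hGarr : VArrows2 G (Kc (k - 1)) (Kc (k - 1)))
    (hmin : Fintype.card α = Fv2 (Kc (k - 1)) (Kc (k - 1)) k)
    (f : ℕ)
    (hf : f = sSup {m | ∃ s : Finset α, s.card = m ∧ (G.induce ↑s).CliqueFree (k - 1)}) :
    Fv2 (Jgraph k) (Jgraph k) k ≤ 3 * Fv2 (Kc (k - 1)) (Kc (k - 1)) k - f := by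
  classical
  obtain ⟨s, hs, hsf⟩ := exists_finset_card_eq_sSup (P := fun s : Finset α =>
    (G.induce ↑s).CliqueFree (k - 1)) ⟨∅, cliqueFree_of_card_lt (by simp; omega)⟩
  let p : α ⊕ α ⊕ {v // v ∉ s} → α := Sum.elim id (Sum.elim id Subtype.val)
  have hJ := hGarr.comap_Jgraph (by omega) hs p
    (fun v => ⟨.inl v, .inr (.inl v), by simp, rfl, rfl⟩)
    (fun v hv => ⟨.inl v, .inr (.inl v), .inr (.inr ⟨v, hv⟩), by simp, by simp, by simp,
      rfl, rfl, rfl⟩)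
  calc Fv2 (Jgraph k) (Jgraph k) k ≤ Fintype.card (α ⊕ α ⊕ {v // v ∉ s}) :=
        Fv2_le_card (hGfree.of_hom (Hom.comap p G)) hJ
    _ = 3 * Fv2 (Kc (k - 1)) (Kc (k - 1)) k - f := by
        have := s.card_le_univ
        simp only [Fintype.card_sum, Fintype.card_subtype_compl, Fintype.card_coe, ← hmin, hf,
          ← hsf]
        omega
end
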